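/- For a 1-dimensional Noetherian local ring (R, m), an m-primary ideal I, an I-admissible filtration 𝓘 = {I_n}, and a minimal reduction J = (x) of 𝓘, one has e_1(𝓘) = Σ_{n≥1} [ length(I_n / J·I_{n-1}) − length((0 : x) ∩ I_{n-1}) ]. -/

import Mathlib

open IsLocalRing

/-- Length of a module, as the Krull dimension of its lattice of submodules. -/
noncomputable def modLen (R M : Type*) [CommRing R] [AddCommGroup M] [Module R M] : ℕ :=
  ((Order.krullDim (Submodule R M)).unbotD 0).toNat

/-- `F` is an `I`-admissible (ℤ-indexed) filtration of ideals. -/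
def IsAdmissibleFiltration {R : Type*} [CommRing R] (I : Ideal R) (F : ℤ → Ideal R) : Prop :=
  (∀ n : ℤ, F (n + 1) ≤ F n) ∧ (∀ m n : ℤ, F m * F n ≤ F (m + n)) ∧
    (∀ n : ℤ, n ≤ 0 → F n = ⊤) ∧
    ∃ k : ℕ, ∀ n : ℤ, I ^ n.toNat ≤ F n ∧ F n ≤ I ^ (n - k).toNat

/-- The length of `A/B` for ideals `B ≤ A`. -/
noncomputable def idealQuotLen (R : Type*) [CommRing R] (A B : Ideal R) : ℕ :=
  modLen R (A ⧸ Submodule.comap (Submodule.subtype (A : Submodule R R)) (B : Submodule R R))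

/-!
Write `ℓ n = λ(R/Iₙ)` and `K = (0 : x)`. Multiplication by `x` induces `R/(K + Iₙ) ≅ (x)/xIₙ`, so
computing `λ(R/xIₙ)` once through `Iₙ₊₁` and once through `(x)` gives
`λ(Iₙ₊₁/xIₙ) - λ(K ∩ Iₙ) = λ(R/(x)) - λ(K) + ℓ n - ℓ (n + 1)`.
For large `n` the left side vanishes: `Iₙ₊₁ = xIₙ`, and `Iₙ ⊆ (xʲ)` while `K ∩ (xʲ) = 0` once the
chain `(0 : xʲ)` has stabilised. The sum therefore telescopes, and comparing with
`ℓ n = e₀ n - e₁` forces `λ(R/(x)) - λ(K) = e₀` and makes the sum equal to `e₁`. All lengths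
involved are finite since the ideals contain a power of `𝔪`, and `K` embeds into `R/Iₙ` for
large `n`.
-/

open Filter

section Length

variable {R M : Type*} [CommRing R] [AddCommGroup M] [Module R M]

lemma modLen_eq_toNat_length : modLen R M = (Module.length R M).toNat := by
  rw [modLen, ← Module.coe_length]
  rfl

lemma Module.length_eq_length_add_length_quotient (P : Submodule R M) :
    Module.length R M = Module.length R P + Module.length R (M ⧸ P) :=
  Module.length_eq_add_of_exact _ _ P.injective_subtype P.mkQ_surjective
    (LinearMap.exact_subtype_mkQ P)

lemma Module.length_quotient_eq_add_of_le {A B : Submodule R M} (h : A ≤ B) :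
    Module.length R (M ⧸ A) =
      Module.length R (B ⧸ A.comap B.subtype) + Module.length R (M ⧸ B) := by
  have hker : LinearMap.ker (A.mkQ ∘ₗ B.subtype) = A.comap B.subtype := by
    rw [LinearMap.ker_comp, Submodule.ker_mkQ]
  have hrange : LinearMap.range (A.mkQ ∘ₗ B.subtype) = B.map A.mkQ := by
    rw [LinearMap.range_comp, Submodule.range_subtype]
  rw [Module.length_eq_length_add_length_quotient (B.map A.mkQ),
    (Submodule.quotientQuotientEquivQuotient A B h).length_eq,
    ← ((Submodule.quotEquivOfEq _ _ hker.symm).trans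
      ((A.mkQ ∘ₗ B.subtype).quotKerEquivRange.trans (LinearEquiv.ofEq _ _ hrange))).length_eq]

lemma modLen_eq_add_modLen_quotient (P : Submodule R M) (h : Module.length R M ≠ ⊤) :
    modLen R M = modLen R P + modLen R (M ⧸ P) := by
  rw [Module.length_eq_length_add_length_quotient P] at h
  simp only [modLen_eq_toNat_length, Module.length_eq_length_add_length_quotient P]
  exact ENat.toNat_add (ne_top_of_le_ne_top h le_self_add) (ne_top_of_le_ne_top h le_add_self)

lemma modLen_quotient_eq_add_of_le {A B : Submodule R M} (h : A ≤ B)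
    (hfin : Module.length R (M ⧸ A) ≠ ⊤) :
    modLen R (M ⧸ A) = modLen R (B ⧸ A.comap B.subtype) + modLen R (M ⧸ B) := by
  rw [Module.length_quotient_eq_add_of_le h] at hfin
  simp only [modLen_eq_toNat_length, Module.length_quotient_eq_add_of_le h]
  exact ENat.toNat_add (ne_top_of_le_ne_top hfin le_self_add)
    (ne_top_of_le_ne_top hfin le_add_self)

lemma LinearEquiv.modLen_eq {N : Type*} [AddCommGroup N] [Module R N] (e : M ≃ₗ[R] N) :
    modLen R M = modLen R N := by
  simp only [modLen_eq_toNat_length, e.length_eq]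

lemma Module.length_le_length_quotient_of_disjoint {P Q : Submodule R M} (h : Disjoint P Q) :
    Module.length R P ≤ Module.length R (M ⧸ Q) := by
  refine Module.length_le_of_injective (Q.mkQ ∘ₗ P.subtype) ?_
  rw [← LinearMap.ker_eq_bot, LinearMap.ker_comp, Submodule.ker_mkQ,
    ← Submodule.disjoint_iff_comap_eq_bot]
  exact h

lemma modLen_eq_zero [Subsingleton M] : modLen R M = 0 := by
  simp [modLen_eq_toNat_length, Module.length_eq_zero]

lemma idealQuotLen_eq_zero_of_le {A B : Ideal R} (h : A ≤ B) :
    idealQuotLen R A B = 0 := by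
  have : Subsingleton (A ⧸ Submodule.comap (A : Submodule R R).subtype (B : Submodule R R)) := by
    rw [Submodule.Quotient.subsingleton_iff, Submodule.comap_subtype_eq_top]
    exact h
  exact modLen_eq_zero

end Length

lemma IsLocalRing.isArtinianRing_quotient_of_pow_le {R : Type*} [CommRing R] [IsNoetherianRing R]
    [IsLocalRing R] {J : Ideal R} {t : ℕ} (h : maximalIdeal R ^ t ≤ J) :
    IsArtinianRing (R ⧸ J) := by
  have : Ring.KrullDimLE 0 (R ⧸ J) := Ring.krullDimLE_zero_iff.mpr fun P hP ↦
    Ideal.isMaximal_of_isIntegral_of_isMaximal_comap _ <| by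
      have hP' := hP.comap (Ideal.Quotient.mk J)
      convert IsLocalRing.maximalIdeal.isMaximal R
      refine le_antisymm (le_maximalIdeal hP'.ne_top) ?_
      exact hP'.le_of_pow_le (h.trans fun a ha ↦ by simp [Ideal.Quotient.eq_zero_iff_mem.mpr ha])
  exact IsNoetherianRing.isArtinianRing_of_krullDimLE_zero

lemma IsLocalRing.length_quotient_ne_top_of_pow_le {R : Type*} [CommRing R] [IsNoetherianRing R]
    [IsLocalRing R] {J : Ideal R} {t : ℕ} (h : maximalIdeal R ^ t ≤ J) :
    Module.length R (R ⧸ J) ≠ ⊤ := by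
  have := isArtinianRing_quotient_of_pow_le h
  have : IsArtinian R (R ⧸ J) :=
    isArtinian_of_surjective_algebraMap (Ideal.Quotient.mk_surjective (I := J))
  exact Module.length_ne_top

lemma eventually_disjoint_ker_toSpanSingleton_span_pow {R : Type*} [CommRing R]
    [IsNoetherianRing R] (x : R) :
    ∀ᶠ j in atTop,
      Disjoint (LinearMap.ker (LinearMap.toSpanSingleton R R x)) (Ideal.span {x ^ j}) := by
  filter_upwards [Module.End.eventually_disjoint_ker_pow_range_pow (LinearMap.mulLeft R x),
    eventually_ge_atTop 1] with j hj hj1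
  rw [LinearMap.pow_mulLeft] at hj
  refine hj.mono (fun y hy ↦ ?_) (fun y hy ↦ ?_)
  · rw [LinearMap.mem_ker, LinearMap.toSpanSingleton_apply, smul_eq_mul] at hy
    rw [LinearMap.mem_ker, LinearMap.mulLeft_apply, ← Nat.sub_add_cancel hj1, pow_succ, mul_assoc,
      mul_comm x, hy, mul_zero]
  · obtain ⟨r, rfl⟩ := Ideal.mem_span_singleton'.mp hy
    exact ⟨r, mul_comm _ _⟩

section Multiplication

variable {R : Type*} [CommRing R]

lemma mul_mem_span_singleton_mul_iff {x r : R} {F : Ideal R} :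
    r * x ∈ Ideal.span {x} * F ↔ r ∈ LinearMap.ker (LinearMap.toSpanSingleton R R x) ⊔ F := by
  simp only [Ideal.mem_span_singleton_mul, Submodule.mem_sup, LinearMap.mem_ker, smul_eq_mul,
    LinearMap.toSpanSingleton_apply]
  constructor
  · rintro ⟨z, hz, hzx⟩
    exact ⟨r - z, by rw [sub_mul, ← hzx]; ring, z, hz, by ring⟩
  · rintro ⟨k, hk, z, hz, rfl⟩
    exact ⟨z, hz, by rw [add_mul, hk]; ring⟩

noncomputable def quotientKerSupEquivSpanQuotient (x : R) (F : Ideal R) :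
    (R ⧸ (LinearMap.ker (LinearMap.toSpanSingleton R R x) ⊔ F)) ≃ₗ[R]
      (Ideal.span {x} ⧸ Submodule.comap (Submodule.subtype (Ideal.span {x} : Submodule R R))
        ((Ideal.span {x} * F : Ideal R) : Submodule R R)) :=
  let φ := Submodule.mkQ _ ∘ₗ
    LinearMap.toSpanSingleton R (Ideal.span {x} : Submodule R R)
      ⟨x, Ideal.mem_span_singleton_self x⟩
  (Submodule.quotEquivOfEq _ _ <| by
      ext r
      simpa [φ, Submodule.Quotient.mk_eq_zero] using mul_mem_span_singleton_mul_iff.symm).trans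
    (φ.quotKerEquivOfSurjective <| by
      refine (Submodule.mkQ_surjective _).comp fun ⟨y, hy⟩ ↦ ?_
      obtain ⟨r, rfl⟩ := Ideal.mem_span_singleton'.mp hy
      exact ⟨r, rfl⟩)

lemma idealQuotLen_sub_modLen_ker_inf {x : R} {F G : Ideal R} (hG : Ideal.span {x} * F ≤ G)
    (hxF : Module.length R (R ⧸ Ideal.span {x} * F) ≠ ⊤) (hF : Module.length R (R ⧸ F) ≠ ⊤)
    (hK : Module.length R (LinearMap.ker (LinearMap.toSpanSingleton R R x)) ≠ ⊤) :
    (idealQuotLen R G (Ideal.span {x} * F) : ℤ) -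
        modLen R ↥((LinearMap.ker (LinearMap.toSpanSingleton R R x) : Submodule R R) ⊓
          (F : Submodule R R)) =
      modLen R (R ⧸ Ideal.span {x}) - modLen R (LinearMap.ker (LinearMap.toSpanSingleton R R x))
        + modLen R (R ⧸ F) - modLen R (R ⧸ G) := by
  have hG' := modLen_quotient_eq_add_of_le (M := R) hG hxF
  have hx := modLen_quotient_eq_add_of_le (M := R) Ideal.mul_le_left hxF
  rw [← (quotientKerSupEquivSpanQuotient x F).modLen_eq] at hx
  set K : Submodule R R := LinearMap.ker (LinearMap.toSpanSingleton R R x)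
  have hKF := modLen_quotient_eq_add_of_le (M := R) (le_sup_right : (F : Submodule R R) ≤ K ⊔ F)
    hF
  have hK' := modLen_eq_add_modLen_quotient (K.comap K.subtype ⊓ Submodule.comap K.subtype F) hK
  rw [(LinearMap.quotientInfEquivSupQuotient K F).modLen_eq, ← Submodule.comap_inf,
    (Submodule.comapSubtypeEquivOfLe (inf_le_left : K ⊓ F ≤ K)).modLen_eq] at hK'
  unfold idealQuotLen
  omega

end Multiplication

section Filtration

variable {R : Type*} [CommRing R] {I : Ideal R} {F : ℤ → Ideal R}

lemma IsAdmissibleFiltration.exists_pow_maximalIdeal_le [IsNoetherianRing R] [IsLocalRing R]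
    (hF : IsAdmissibleFiltration I F) (hI : I.radical = maximalIdeal R) :
    ∃ s : ℕ, ∀ n : ℕ, maximalIdeal R ^ (s * n) ≤ F n := by
  obtain ⟨-, -, -, k, hFk⟩ := hF
  obtain ⟨s, hs⟩ := Ideal.exists_radical_pow_le_of_fg I (IsNoetherian.noetherian _)
  refine ⟨s, fun n ↦ ?_⟩
  rw [pow_mul, ← hI]
  exact (Ideal.pow_right_mono hs n).trans (by simpa using (hFk n).1)

lemma IsAdmissibleFiltration.span_singleton_mul_le (hF : IsAdmissibleFiltration I F) {x : R}
    (hx : x ∈ F 1) (n : ℤ) : Ideal.span {x} * F n ≤ F (n + 1) := by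
  rw [add_comm]
  exact (Ideal.mul_mono_left ((Ideal.span_singleton_le_iff_mem _).mpr hx)).trans (hF.2.1 1 n)

lemma le_span_singleton_pow_of_reduction {x : R} {N : ℕ}
    (hN : ∀ n : ℕ, N ≤ n → Ideal.span {x} * F n = F (n + 1)) (j : ℕ) :
    F (N + j : ℕ) ≤ Ideal.span {x ^ j} := by
  induction j with
  | zero => simp
  | succ j ih =>
    rw [← Nat.add_assoc, Nat.cast_succ, ← hN _ (Nat.le_add_right N j), pow_succ',
      ← Ideal.span_singleton_mul_span_singleton]
    exact Ideal.mul_mono_right ih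

lemma eventually_disjoint_ker_toSpanSingleton [IsNoetherianRing R] {G : ℕ → Ideal R} {x : R}
    {N : ℕ} (h : ∀ j, G (N + j) ≤ Ideal.span {x ^ j}) :
    ∀ᶠ n in atTop, Disjoint (LinearMap.ker (LinearMap.toSpanSingleton R R x)) (G n) := by
  obtain ⟨j₀, hj₀⟩ := eventually_atTop.mp (eventually_disjoint_ker_toSpanSingleton_span_pow x)
  refine eventually_atTop.mpr ⟨N + j₀, fun n hn ↦ ?_⟩
  obtain ⟨j, rfl⟩ := Nat.exists_eq_add_of_le hn
  rw [Nat.add_assoc]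
  exact (hj₀ _ (Nat.le_add_right _ _)).mono_right (h _)

end Filtration

lemma eq_finsum_of_telescoping {d ℓ : ℕ → ℤ} {c e₀ e₁ : ℤ}
    (hd : ∀ n, d n = c + ℓ n - ℓ (n + 1)) (hd0 : ∀ᶠ n in atTop, d n = 0) (hℓ0 : ℓ 0 = 0)
    (hℓ : ∀ᶠ n in atTop, ℓ n = e₀ * n - e₁) : e₁ = ∑ᶠ n, d n := by
  obtain ⟨N, hN⟩ := eventually_atTop.mp (hd0.and hℓ)
  have hc : c = e₀ := by
    have := hd N
    rw [(hN N le_rfl).1, (hN N le_rfl).2, (hN (N + 1) N.le_succ).2] at this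
    push_cast at this
    linarith
  have hsupp : Function.support d ⊆ Finset.range N := fun n hn ↦ by
    by_contra h
    exact hn (hN n (by simpa using h)).1
  rw [finsum_eq_sum_of_support_subset d hsupp, Finset.sum_congr rfl fun n _ ↦ hd n]
  simp only [add_sub_assoc, Finset.sum_add_distrib, Finset.sum_range_sub', Finset.sum_const,
    Finset.card_range, hℓ0, (hN N le_rfl).2, hc, nsmul_eq_mul]
  ring

theorem stmt1_general {R : Type*} [CommRing R] [IsNoetherianRing R] [IsLocalRing R]
    (I : Ideal R) (hI : I.radical = maximalIdeal R)
    (F : ℤ → Ideal R) (hF : IsAdmissibleFiltration I F)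
    (x : R) (hx1 : x ∈ F 1)
    (hred : ∃ N : ℕ, ∀ n : ℕ, N ≤ n → Ideal.span {x} * F n = F (n + 1))
    (e0 e1 : ℤ)
    (hP : ∃ N : ℕ, ∀ n : ℕ, N ≤ n → (modLen R (R ⧸ F n) : ℤ) = e0 * n - e1) :
    e1 = ∑ᶠ n : ℕ,
      ((idealQuotLen R (F (n + 1)) (Ideal.span {x} * F n) : ℤ) -
        (modLen R ↥((LinearMap.ker (LinearMap.toSpanSingleton R R x) : Submodule R R) ⊓
          (F n : Submodule R R)) : ℤ)) := by
  obtain ⟨N, hN⟩ := hred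
  obtain ⟨s, hmF⟩ := hF.exists_pow_maximalIdeal_le hI
  have hFpow := le_span_singleton_pow_of_reduction hN
  have hmx : maximalIdeal R ^ (s * (N + 1)) ≤ Ideal.span {x} := by
    simpa using (hmF (N + 1)).trans (hFpow 1)
  have hfinF (n : ℕ) : Module.length R (R ⧸ F n) ≠ ⊤ :=
    length_quotient_ne_top_of_pow_le (hmF n)
  have hfinxF (n : ℕ) : Module.length R (R ⧸ Ideal.span {x} * F n) ≠ ⊤ :=
    length_quotient_ne_top_of_pow_le (t := s * (N + 1) + s * n)
      (by rw [pow_add]; exact Ideal.mul_mono hmx (hmF n))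
  set K : Submodule R R := LinearMap.ker (LinearMap.toSpanSingleton R R x)
  obtain ⟨n₀, hKF⟩ := eventually_atTop.mp
    (eventually_disjoint_ker_toSpanSingleton (G := fun n : ℕ ↦ F n) hFpow)
  have hfinK : Module.length R K ≠ ⊤ :=
    ne_top_of_le_ne_top (hfinF n₀) (Module.length_le_length_quotient_of_disjoint (hKF n₀ le_rfl))
  refine eq_finsum_of_telescoping (c := modLen R (R ⧸ Ideal.span {x}) - modLen R K)
    (ℓ := fun n ↦ modLen R (R ⧸ F n)) (e₀ := e0) (fun n ↦ ?_) ?_ ?_ ?_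
  · rw [Nat.cast_succ]
    exact idealQuotLen_sub_modLen_ker_inf (hF.span_singleton_mul_le hx1 n) (hfinxF n) (hfinF n)
      hfinK
  · filter_upwards [eventually_ge_atTop (max N n₀)] with n hn
    rw [← hN n (le_of_max_le_left hn), idealQuotLen_eq_zero_of_le le_rfl,
      (hKF n (le_of_max_le_right hn)).eq_bot, modLen_eq_zero, sub_self]
  · have : Subsingleton (R ⧸ F (0 : ℕ)) := Ideal.Quotient.subsingleton_iff.mpr (hF.2.2.1 0 le_rfl)
    exact congrArg Nat.cast modLen_eq_zero
  · obtain ⟨NP, hNP⟩ := hP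
    exact eventually_atTop.mpr ⟨NP, hNP⟩

theorem stmt1 {R : Type*} [CommRing R] [IsNoetherianRing R] [IsLocalRing R]
    (hdim : ringKrullDim R = 1)
    (I : Ideal R) (hI : I.radical = maximalIdeal R)
    (F : ℤ → Ideal R) (hF : IsAdmissibleFiltration I F)
    (x : R) (hx1 : x ∈ F 1)
    (hred : ∃ N : ℕ, ∀ n : ℕ, N ≤ n → Ideal.span {x} * F n = F (n + 1))
    (e0 e1 : ℤ)
    (hP : ∃ N : ℕ, ∀ n : ℕ, N ≤ n → (modLen R (R ⧸ F n) : ℤ) = e0 * n - e1) :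
    e1 = ∑ᶠ n : ℕ,
      ((idealQuotLen R (F (n + 1)) (Ideal.span {x} * F n) : ℤ) -
        (modLen R ↥((LinearMap.ker (LinearMap.toSpanSingleton R R x) : Submodule R R) ⊓
          (F n : Submodule R R)) : ℤ)) :=
  stmt1_general I hI F hF x hx1 hred e0 e1 hP
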